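/- arXiv:2509.22608 — 3 statements merged into one kernel-verified Lean document; each statement's English description precedes it below -/
import Mathlib

section
/- Let n ≥ 1 and let Ã be the symmetric (2n+2)×(2n+2) matrix defined above (diagonal entries -2, Ã_{1j}=Ã_{j1}=1 and Ã_{2n+2,j}=Ã_{j,2n+2}=-1 for 2≤j≤2n+1, Ã_{1,2n+2}=Ã_{2n+2,1}=2n+1, other entries 0). Then the eigenspace of Ã corresponding to the eigenvalue 2n-1 is one-dimensional over ℝ, spanned by e₁ + e_{2n+2}. -/
/-!
Write `a`, `b` for the first and last coordinates of `v` and `x₁, …, x₂ₙ` for the interior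
ones. The interior rows of `Ã v = (2n-1) v` say `(2n+1) xₖ = a - b`, and the first row says
`∑ xₖ = (2n+1)(a - b)`. Summing the interior rows gives `(2n+1) ∑ xₖ = 2n (a - b)`, hence
`((2n+1)² - 2n)(a - b) = 0`; so `a = b` and every `xₖ` vanishes.
-/

open Matrix Finset

/-- The symmetrized Seifert matrix Ã of size (2n+2)×(2n+2) (0-indexed). -/
def Atilde (n : ℕ) : Matrix (Fin (2*n+2)) (Fin (2*n+2)) ℝ :=
  Matrix.of fun i j =>
    if i = j then -2
    else if ((i : ℕ) = 0 ∧ (j : ℕ) = 2*n+1) ∨ ((i : ℕ) = 2*n+1 ∧ (j : ℕ) = 0) then (2*n+1 : ℝ)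
    else if (i : ℕ) = 0 ∨ (j : ℕ) = 0 then 1
    else if (i : ℕ) = 2*n+1 ∨ (j : ℕ) = 2*n+1 then -1
    else 0

/-- The vector w = e₁ + e_{2n+2}. -/
def wvec (n : ℕ) : Fin (2*n+2) → ℝ :=
  fun i => if (i : ℕ) = 0 ∨ (i : ℕ) = 2*n+1 then 1 else 0

theorem Fin.sum_univ_succ_castSucc {M : Type*} [AddCommMonoid M] {m : ℕ} (f : Fin (m + 2) → M) :
    ∑ i, f i = f 0 + f (Fin.last _) + ∑ k : Fin m, f k.castSucc.succ := by
  rw [Fin.sum_univ_succ, Fin.sum_univ_castSucc, Fin.succ_last]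
  abel

theorem Fin.forall_fin_succ_castSucc {m : ℕ} {P : Fin (m + 2) → Prop} :
    (∀ i, P i) ↔ P 0 ∧ P (Fin.last _) ∧ ∀ k : Fin m, P k.castSucc.succ := by
  rw [Fin.forall_fin_succ, Fin.forall_fin_succ', Fin.succ_last]
  exact and_congr_right' and_comm

lemma Atilde_apply (n : ℕ) (i j : Fin (2 * n + 2)) :
    Atilde n i j = if (i : ℕ) = j then -2
      else if ((i : ℕ) = 0 ∧ (j : ℕ) = 2*n+1) ∨ ((i : ℕ) = 2*n+1 ∧ (j : ℕ) = 0) then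
        (2*n+1 : ℝ)
      else if (i : ℕ) = 0 ∨ (j : ℕ) = 0 then 1
      else if (i : ℕ) = 2*n+1 ∨ (j : ℕ) = 2*n+1 then -1
      else 0 := by
  simp only [Atilde, Matrix.of_apply, Fin.ext_iff]

section Entries

variable (n : ℕ) (k l : Fin (2 * n))

@[simp] lemma Atilde_zero_zero : Atilde n 0 0 = -2 := by simp [Atilde]

@[simp] lemma Atilde_zero_last : Atilde n 0 (Fin.last _) = 2 * n + 1 := by simp [Atilde]

@[simp] lemma Atilde_zero_mid : Atilde n 0 k.castSucc.succ = 1 := by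
  rw [Atilde_apply]; simp [k.isLt.ne]

@[simp] lemma Atilde_last_zero : Atilde n (Fin.last _) 0 = 2 * n + 1 := by simp [Atilde]

@[simp] lemma Atilde_last_last : Atilde n (Fin.last _) (Fin.last _) = -2 := by simp [Atilde]

@[simp] lemma Atilde_last_mid : Atilde n (Fin.last _) k.castSucc.succ = -1 := by
  rw [Atilde_apply]; simp [k.isLt.ne']

@[simp] lemma Atilde_mid_zero : Atilde n k.castSucc.succ 0 = 1 := by
  rw [Atilde_apply]; simp [k.isLt.ne]

@[simp] lemma Atilde_mid_last : Atilde n k.castSucc.succ (Fin.last _) = -1 := by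
  rw [Atilde_apply]; simp [k.isLt.ne]

@[simp] lemma Atilde_mid_mid :
    Atilde n k.castSucc.succ l.castSucc.succ = if k = l then -2 else 0 := by
  rw [Atilde_apply]; simp [Fin.val_eq_val, k.isLt.ne, l.isLt.ne]

@[simp] lemma wvec_zero : wvec n 0 = 1 := by simp [wvec]

@[simp] lemma wvec_last : wvec n (Fin.last _) = 1 := by simp [wvec]

@[simp] lemma wvec_mid : wvec n k.castSucc.succ = 0 := by simp [wvec, k.isLt.ne]

end Entries

section MulVec

variable {n : ℕ} (v : Fin (2 * n + 2) → ℝ)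

lemma Atilde_mulVec_zero :
    (Atilde n *ᵥ v) 0 =
      -2 * v 0 + (2 * n + 1) * v (Fin.last _) + ∑ k : Fin (2 * n), v k.castSucc.succ := by
  simp [mulVec, dotProduct, Fin.sum_univ_succ_castSucc]

lemma Atilde_mulVec_last :
    (Atilde n *ᵥ v) (Fin.last _) =
      (2 * n + 1) * v 0 - 2 * v (Fin.last _) - ∑ k : Fin (2 * n), v k.castSucc.succ := by
  simp only [mulVec, dotProduct, Fin.sum_univ_succ_castSucc, Atilde_last_zero, Atilde_last_last,
    Atilde_last_mid, neg_one_mul, sum_neg_distrib]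
  ring

lemma Atilde_mulVec_mid (k : Fin (2 * n)) :
    (Atilde n *ᵥ v) k.castSucc.succ = v 0 - 2 * v k.castSucc.succ - v (Fin.last _) := by
  simp only [mulVec, dotProduct, Fin.sum_univ_succ_castSucc, Atilde_mid_zero, Atilde_mid_last,
    Atilde_mid_mid, ite_mul, zero_mul, sum_ite_eq, mem_univ, if_true]
  ring

lemma Atilde_mulVec_eq_smul_iff :
    Atilde n *ᵥ v = ((2 * n : ℝ) - 1) • v ↔
      ∑ k : Fin (2 * n), v k.castSucc.succ = (2 * n + 1) * (v 0 - v (Fin.last _)) ∧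
      ∀ k : Fin (2 * n), (2 * n + 1) * v k.castSucc.succ = v 0 - v (Fin.last _) := by
  rw [funext_iff, Fin.forall_fin_succ_castSucc]
  simp only [Atilde_mulVec_zero, Atilde_mulVec_last, Atilde_mulVec_mid, Pi.smul_apply,
    smul_eq_mul]
  refine ⟨fun ⟨h0, _, hmid⟩ => ⟨by linarith, fun k => by linarith [hmid k]⟩,
    fun ⟨hsum, hmid⟩ => ⟨by linarith, by linarith, fun k => by linarith [hmid k]⟩⟩

end MulVec

theorem stmt_1_general (n : ℕ) (v : Fin (2*n+2) → ℝ) :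
    (Atilde n).mulVec v = ((2*n : ℝ) - 1) • v ↔ ∃ c : ℝ, v = c • wvec n := by
  rw [Atilde_mulVec_eq_smul_iff]
  constructor
  · rintro ⟨hsum, hmid⟩
    have hsum_mid : (2 * n + 1) * ∑ k : Fin (2 * n), v k.castSucc.succ =
        2 * n * (v 0 - v (Fin.last _)) := by
      rw [mul_sum, sum_congr rfl fun k _ => hmid k, sum_const, card_univ, Fintype.card_fin,
        nsmul_eq_mul]
      push_cast; ring
    have hends : v 0 = v (Fin.last _) := by
      have hprod : ((2 * n + 1) ^ 2 - 2 * n) * (v 0 - v (Fin.last _)) = 0 := by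
        rw [hsum] at hsum_mid; linear_combination hsum_mid
      have hne : ((2 * n + 1) ^ 2 - 2 * n : ℝ) ≠ 0 := by nlinarith
      exact sub_eq_zero.mp ((mul_eq_zero.mp hprod).resolve_left hne)
    refine ⟨v 0, funext <| Fin.forall_fin_succ_castSucc.mpr
      ⟨by simp, by simp [hends], fun k => ?_⟩⟩
    have hk := hmid k
    rw [hends, sub_self] at hk
    simpa [(by positivity : (2 * n + 1 : ℝ) ≠ 0)] using hk
  · rintro ⟨c, rfl⟩
    simp

/-- The eigenspace of Ã for eigenvalue 2n-1 is one-dimensional, spanned by w. -/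
theorem stmt_1 (n : ℕ) (hn : 1 ≤ n) (v : Fin (2*n+2) → ℝ) :
    (Atilde n).mulVec v = ((2*n : ℝ) - 1) • v ↔ ∃ c : ℝ, v = c • wvec n :=
  stmt_1_general n v
end

section
/- Let n ≥ 1 and let Ã be the symmetric (2n+2)×(2n+2) matrix of the Seifert form (diagonal entries -2, Ã_{1j}=Ã_{j1}=1 and Ã_{2n+2,j}=Ã_{j,2n+2}=-1 for 2≤j≤2n+1, Ã_{1,2n+2}=Ã_{2n+2,1}=2n+1, other entries 0). Then for every vector v ∈ ℝ^{2n+2} orthogonal to w = e₁ + e_{2n+2}, one has vᵀ Ã v ≤ 0. -/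
open Matrix Finset

/-- The quadratic form of Ã is negative semidefinite on the orthogonal complement
of w = e₁ + e_{2n+2}. -/
theorem stmt_6 (n : ℕ) (hn : 1 ≤ n) (v : Fin (2*n+2) → ℝ)
    (hperp : v ⬝ᵥ wvec n = 0) :
    v ⬝ᵥ (Atilde n).mulVec v ≤ 0 := by
  have hA : ∀ i j : Fin (2*n+2), Atilde n i j =
      (if i = j then (-2:ℝ)
       else if ((i:ℕ) = 0 ∧ (j:ℕ) = 2*n+1) ∨ ((i:ℕ) = 2*n+1 ∧ (j:ℕ) = 0) then (2*(n:ℝ)+1)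
       else if (i:ℕ) = 0 ∨ (j:ℕ) = 0 then 1
       else if (i:ℕ) = 2*n+1 ∨ (j:ℕ) = 2*n+1 then -1
       else 0) := fun i j => rfl
  set i0 : Fin (2*n+2) := ⟨0, by omega⟩ with hi0
  set iL : Fin (2*n+2) := ⟨2*n+1, by omega⟩ with hiL
  have hv0 : (i0 : ℕ) = 0 := rfl
  have hvL : (iL : ℕ) = 2*n+1 := rfl
  have hne : i0 ≠ iL := by
    intro h
    have := congrArg (Fin.val) h
    rw [hv0, hvL] at this
    omega
  have hneL : iL ≠ i0 := fun h => hne h.symm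
  set a := v i0 with ha
  set S := ∑ j, if j ≠ i0 ∧ j ≠ iL then v j else 0 with hS
  set T := ∑ j, if j ≠ i0 ∧ j ≠ iL then (v j)^2 else 0 with hT
  -- orthogonality gives v iL = -a
  have hb : v iL = -a := by
    have h1 : v ⬝ᵥ wvec n = v i0 + v iL := by
      unfold dotProduct wvec
      have hpt : ∀ i : Fin (2*n+2), v i * (if (i:ℕ) = 0 ∨ (i:ℕ) = 2*n+1 then (1:ℝ) else 0)
          = (if i = i0 then v i else 0) + (if i = iL then v i else 0) := by
        intro i
        by_cases h0 : i = i0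
        · subst h0
          rw [if_pos (Or.inl hv0), if_pos rfl, if_neg hne]; ring
        · by_cases h1 : i = iL
          · subst h1
            rw [if_pos (Or.inr hvL), if_neg hneL, if_pos rfl]; ring
          · have hn0 : (i:ℕ) ≠ 0 := fun h => h0 (Fin.ext (h.trans hv0.symm))
            have hnL : (i:ℕ) ≠ 2*n+1 := fun h => h1 (Fin.ext (h.trans hvL.symm))
            rw [if_neg (by tauto), if_neg h0, if_neg h1]; ring
      rw [Finset.sum_congr rfl (fun i _ => hpt i), Finset.sum_add_distrib,
        Finset.sum_ite_eq', Finset.sum_ite_eq',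
        if_pos (Finset.mem_univ i0), if_pos (Finset.mem_univ iL)]
    rw [hperp] at h1
    linarith
  -- row i0
  have hrow0 : (Atilde n).mulVec v i0 = -2*a + (2*(n:ℝ)+1)*(v iL) + S := by
    show (fun j => Atilde n i0 j) ⬝ᵥ v = _
    unfold dotProduct
    have hpt : ∀ j : Fin (2*n+2), Atilde n i0 j * v j
        = (if j = i0 then -2 * v j else 0) + (if j = iL then (2*(n:ℝ)+1) * v j else 0)
          + (if j ≠ i0 ∧ j ≠ iL then v j else 0) := by
      intro j
      rw [hA]
      by_cases h0 : j = i0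
      · subst h0
        rw [if_pos rfl, if_pos rfl, if_neg hne, if_neg (fun h => h.1 rfl)]; ring
      · by_cases h1 : j = iL
        · subst h1
          rw [if_neg hne, if_pos (Or.inl ⟨hv0, hvL⟩), if_neg h0, if_pos rfl,
            if_neg (fun h => h.2 rfl)]
          ring
        · have hn0 : (j:ℕ) ≠ 0 := fun h => h0 (Fin.ext (h.trans hv0.symm))
          have hnL : (j:ℕ) ≠ 2*n+1 := fun h => h1 (Fin.ext (h.trans hvL.symm))
          rw [if_neg (fun h => h0 h.symm),
            if_neg (by rw [hv0]; rintro (⟨_, h⟩ | ⟨h, _⟩); exacts [hnL h, by omega]),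
            if_pos (Or.inl hv0), if_neg h0, if_neg h1, if_pos ⟨h0, h1⟩]; ring
    rw [Finset.sum_congr rfl (fun j _ => hpt j), Finset.sum_add_distrib,
      Finset.sum_add_distrib, Finset.sum_ite_eq', Finset.sum_ite_eq',
      if_pos (Finset.mem_univ i0), if_pos (Finset.mem_univ iL), ← hS, ← ha]
  -- row iL
  have hrowL : (Atilde n).mulVec v iL = (2*(n:ℝ)+1)*a - 2*(v iL) - S := by
    show (fun j => Atilde n iL j) ⬝ᵥ v = _
    unfold dotProduct
    have hpt : ∀ j : Fin (2*n+2), Atilde n iL j * v j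
        = (if j = i0 then (2*(n:ℝ)+1) * v j else 0) + (if j = iL then -2 * v j else 0)
          + (if j ≠ i0 ∧ j ≠ iL then -v j else 0) := by
      intro j
      rw [hA]
      by_cases h0 : j = i0
      · subst h0
        rw [if_neg hneL, if_pos (Or.inr ⟨hvL, hv0⟩), if_pos rfl, if_neg hne,
          if_neg (fun h => h.1 rfl)]
        ring
      · by_cases h1 : j = iL
        · subst h1
          rw [if_pos rfl, if_neg h0, if_pos rfl, if_neg (fun h => h.2 rfl)]; ring
        · have hn0 : (j:ℕ) ≠ 0 := fun h => h0 (Fin.ext (h.trans hv0.symm))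
          have hnL : (j:ℕ) ≠ 2*n+1 := fun h => h1 (Fin.ext (h.trans hvL.symm))
          rw [if_neg (fun h => h1 h.symm),
            if_neg (by rw [hvL]; rintro (⟨h, _⟩ | ⟨_, h⟩); exacts [by omega, hn0 h]),
            if_neg (by rw [hvL]; rintro (h | h); exacts [by omega, hn0 h]),
            if_pos (Or.inl hvL), if_neg h0, if_neg h1, if_pos ⟨h0, h1⟩]; ring
    rw [Finset.sum_congr rfl (fun j _ => hpt j), Finset.sum_add_distrib,
      Finset.sum_add_distrib, Finset.sum_ite_eq', Finset.sum_ite_eq',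
      if_pos (Finset.mem_univ i0), if_pos (Finset.mem_univ iL)]
    have hmS : ∑ j, (if j ≠ i0 ∧ j ≠ iL then -v j else 0) = -S := by
      rw [hS, ← Finset.sum_neg_distrib]
      exact Finset.sum_congr rfl fun j _ => by split_ifs <;> ring
    rw [hmS, ← ha]
    ring
  -- middle rows
  have hrowM : ∀ i : Fin (2*n+2), i ≠ i0 → i ≠ iL →
      (Atilde n).mulVec v i = a - 2*(v i) - v iL := by
    intro i hm0 hm1
    have hi0' : (i:ℕ) ≠ 0 := fun h => hm0 (Fin.ext (h.trans hv0.symm))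
    have hiL' : (i:ℕ) ≠ 2*n+1 := fun h => hm1 (Fin.ext (h.trans hvL.symm))
    show (fun j => Atilde n i j) ⬝ᵥ v = _
    unfold dotProduct
    have hpt : ∀ j : Fin (2*n+2), Atilde n i j * v j
        = (if j = i0 then v j else 0) + (if j = iL then -v j else 0)
          + (if j = i then -2 * v j else 0) := by
      intro j
      rw [hA]
      by_cases h0 : j = i0
      · subst h0
        rw [if_neg (fun h => hm0 h),
          if_neg (by rw [hv0]; rintro (⟨h, _⟩ | ⟨_, h⟩); exacts [hi0' h, by omega]),
          if_pos (Or.inr hv0), if_pos rfl, if_neg hne, if_neg (fun h => hm0 h.symm)]; ring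
      · by_cases h1 : j = iL
        · subst h1
          rw [if_neg (fun h => hm1 h),
            if_neg (by rw [hvL]; rintro (⟨h, _⟩ | ⟨h, _⟩); exacts [hi0' h, hiL' h]),
            if_neg (by rw [hvL]; rintro (h | h); exacts [hi0' h, by omega]),
            if_pos (Or.inr hvL), if_neg hneL, if_pos rfl, if_neg (fun h => hm1 h.symm)]; ring
        · by_cases h2 : j = i
          · subst h2
            rw [if_pos rfl, if_neg h0, if_neg h1, if_pos rfl]; ring
          · have hn0 : (j:ℕ) ≠ 0 := fun h => h0 (Fin.ext (h.trans hv0.symm))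
            have hnL : (j:ℕ) ≠ 2*n+1 := fun h => h1 (Fin.ext (h.trans hvL.symm))
            rw [if_neg (fun h => h2 h.symm),
              if_neg (by rintro (⟨h, _⟩ | ⟨_, h⟩); exacts [hi0' h, hn0 h]),
              if_neg (by rintro (h | h); exacts [hi0' h, hn0 h]),
              if_neg (by rintro (h | h); exacts [hiL' h, hnL h]),
              if_neg h0, if_neg h1, if_neg h2]; ring
    rw [Finset.sum_congr rfl (fun j _ => hpt j), Finset.sum_add_distrib,
      Finset.sum_add_distrib, Finset.sum_ite_eq', Finset.sum_ite_eq', Finset.sum_ite_eq',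
      if_pos (Finset.mem_univ i0), if_pos (Finset.mem_univ iL), if_pos (Finset.mem_univ i),
      ← ha]
    ring
  -- main computation
  have hmain : v ⬝ᵥ (Atilde n).mulVec v
      = a * (-2*a + (2*(n:ℝ)+1)*(v iL) + S) + (v iL) * ((2*(n:ℝ)+1)*a - 2*(v iL) - S)
        + ((a - v iL) * S - 2 * T) := by
    unfold dotProduct
    have hpt : ∀ i : Fin (2*n+2), v i * (Atilde n).mulVec v i
        = (if i = i0 then a * (-2*a + (2*(n:ℝ)+1)*(v iL) + S) else 0)
          + (if i = iL then (v iL) * ((2*(n:ℝ)+1)*a - 2*(v iL) - S) else 0)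
          + (if i ≠ i0 ∧ i ≠ iL then v i * (a - 2*(v i) - v iL) else 0) := by
      intro i
      by_cases h0 : i = i0
      · subst h0
        rw [hrow0, if_pos rfl, if_neg hne, if_neg (fun h => h.1 rfl), ha]; ring
      · by_cases h1 : i = iL
        · subst h1
          rw [hrowL, if_neg hneL, if_pos rfl, if_neg (fun h => h.2 rfl)]; ring
        · rw [hrowM i h0 h1, if_neg h0, if_neg h1, if_pos ⟨h0, h1⟩]; ring
    rw [Finset.sum_congr rfl (fun i _ => hpt i), Finset.sum_add_distrib,
      Finset.sum_add_distrib, Finset.sum_ite_eq', Finset.sum_ite_eq',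
      if_pos (Finset.mem_univ i0), if_pos (Finset.mem_univ iL)]
    have hmid : ∑ i, (if i ≠ i0 ∧ i ≠ iL then v i * (a - 2*(v i) - v iL) else 0)
        = (a - v iL) * S - 2 * T := by
      have hpt2 : ∀ i : Fin (2*n+2), (if i ≠ i0 ∧ i ≠ iL then v i * (a - 2*(v i) - v iL) else 0)
          = (a - v iL) * (if i ≠ i0 ∧ i ≠ iL then v i else 0)
            - 2 * (if i ≠ i0 ∧ i ≠ iL then (v i)^2 else 0) := by
        intro i; split_ifs <;> ring
      rw [Finset.sum_congr rfl (fun i _ => hpt2 i), Finset.sum_sub_distrib,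
        ← Finset.mul_sum, ← Finset.mul_sum, ← hS, ← hT]
    rw [hmid]
  -- count of middle indices
  have hcard : ∑ j : Fin (2*n+2), (if j ≠ i0 ∧ j ≠ iL then (a^2 : ℝ) else 0)
      = (2*(n:ℝ)) * a^2 := by
    rw [← Finset.sum_filter, Finset.sum_const]
    have hfil : Finset.univ.filter (fun j : Fin (2*n+2) => j ≠ i0 ∧ j ≠ iL)
        = Finset.univ \ {i0, iL} := by
      ext j; simp [not_or]
    rw [hfil, Finset.card_sdiff_of_subset (Finset.subset_univ _), Finset.card_pair hne]
    simp only [Finset.card_univ, Fintype.card_fin, nsmul_eq_mul]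
    push_cast [Nat.add_sub_cancel]
    ring
  -- sum of squares identity
  have hsq : ∑ j, (if j ≠ i0 ∧ j ≠ iL then (v j - a)^2 else 0)
      = T - 2*a*S + (2*(n:ℝ))*a^2 := by
    have hpt3 : ∀ j : Fin (2*n+2), (if j ≠ i0 ∧ j ≠ iL then (v j - a)^2 else 0)
        = (if j ≠ i0 ∧ j ≠ iL then (v j)^2 else 0)
          - 2*a*(if j ≠ i0 ∧ j ≠ iL then v j else 0)
          + (if j ≠ i0 ∧ j ≠ iL then (a^2 : ℝ) else 0) := by
      intro j; split_ifs <;> ring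
    rw [Finset.sum_congr rfl (fun j _ => hpt3 j), Finset.sum_add_distrib,
      Finset.sum_sub_distrib, ← Finset.mul_sum, ← hS, ← hT, hcard]
  have hsqpos : (0:ℝ) ≤ ∑ j, (if j ≠ i0 ∧ j ≠ iL then (v j - a)^2 else 0) :=
    Finset.sum_nonneg fun j _ => by split_ifs <;> positivity
  have hkey : 0 ≤ T - 2*a*S + (2*(n:ℝ))*a^2 := hsq ▸ hsqpos
  rw [hmain, hb]
  have hident : a * (-2*a + (2*(n:ℝ)+1)*(-a) + S) + (-a) * ((2*(n:ℝ)+1)*a - 2*(-a) - S)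
      + ((a - -a) * S - 2 * T)
      = -6*a^2 - 2*(T - 2*a*S + (2*(n:ℝ))*a^2) := by ring
  rw [hident]
  nlinarith [hkey, sq_nonneg a]
end

section
/- Let n ≥ 1 and let Ã be the symmetric (2n+2)×(2n+2) Seifert matrix above. Then 2n-1 is the unique positive eigenvalue of Ã: every eigenvalue λ of Ã satisfies λ ≤ 0 or λ = 2n-1. -/
open Matrix Finset

/-- 2n-1 is the unique positive eigenvalue of Ã. -/
theorem stmt_7 (n : ℕ) (hn : 1 ≤ n) (lam : ℝ) (v : Fin (2*n+2) → ℝ)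
    (hv : v ≠ 0) (hev : (Atilde n).mulVec v = lam • v) :
    lam ≤ 0 ∨ lam = (2*n : ℝ) - 1 := by
  by_cases hlam : lam ≤ 0
  · exact Or.inl hlam
  push_neg at hlam
  right
  set i0 : Fin (2*n+2) := ⟨0, by omega⟩ with hi0def
  set iN : Fin (2*n+2) := ⟨2*n+1, by omega⟩ with hiNdef
  have hne : i0 ≠ iN := by simp [hi0def, hiNdef, Fin.ext_iff]
  set a := v i0 with ha
  set b := v iN with hb
  set S := ∑ j, v j with hSdef
  -- entry lemmas
  have e0 : ∀ j : Fin (2*n+2), Atilde n i0 j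
      = 1 + (if j = i0 then (-3:ℝ) else 0) + (if j = iN then (2*n:ℝ) else 0) := by
    intro j
    obtain ⟨j, hj⟩ := j
    simp only [Atilde, Matrix.of_apply, hi0def, hiNdef, Fin.mk.injEq, Fin.val_mk]
    split_ifs <;> first | (push_cast; ring1) | (exfalso; omega) | (exfalso; simp_all)
  have eN : ∀ j : Fin (2*n+2), Atilde n iN j
      = -1 + (if j = i0 then (2*n+2:ℝ) else 0) + (if j = iN then (-1:ℝ) else 0) := by
    intro j
    obtain ⟨j, hj⟩ := j
    simp only [Atilde, Matrix.of_apply, hi0def, hiNdef, Fin.mk.injEq, Fin.val_mk]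
    split_ifs <;> first | (push_cast; ring1) | (exfalso; omega) | (exfalso; simp_all)
  have eM : ∀ i : Fin (2*n+2), (i:ℕ) ≠ 0 → (i:ℕ) ≠ 2*n+1 → ∀ j : Fin (2*n+2),
      Atilde n i j
      = (if j = i0 then (1:ℝ) else 0) + (if j = i then (-2:ℝ) else 0)
        + (if j = iN then (-1:ℝ) else 0) := by
    intro i hi1 hi2 j
    obtain ⟨i, hi⟩ := i
    obtain ⟨j, hj⟩ := j
    simp only [Fin.val_mk] at hi1 hi2
    simp only [Atilde, Matrix.of_apply, hi0def, hiNdef, Fin.mk.injEq, Fin.val_mk]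
    split_ifs <;> first | (push_cast; ring1) | (exfalso; omega) | (exfalso; simp_all)
  -- row equations
  have H0 : S - 3*a + 2*(n:ℝ)*b = lam * a := by
    have h := congrFun hev i0
    simp only [Matrix.mulVec, dotProduct, Pi.smul_apply, smul_eq_mul] at h
    rw [Finset.sum_congr rfl (fun j _ => by rw [e0 j])] at h
    simp only [add_mul, ite_mul, one_mul, zero_mul, Finset.sum_add_distrib,
      Finset.sum_ite_eq', Finset.mem_univ, if_true] at h
    rw [← ha, ← hb, ← hSdef] at h
    linarith [h]
  have HN : -S + (2*(n:ℝ)+2)*a - b = lam * b := by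
    have h := congrFun hev iN
    simp only [Matrix.mulVec, dotProduct, Pi.smul_apply, smul_eq_mul] at h
    rw [Finset.sum_congr rfl (fun j _ => by rw [eN j])] at h
    simp only [add_mul, ite_mul, one_mul, zero_mul, neg_one_mul, neg_mul,
      Finset.sum_add_distrib, Finset.sum_neg_distrib, Finset.sum_ite_eq',
      Finset.mem_univ, if_true] at h
    rw [← ha, ← hb, ← hSdef] at h
    linarith [h]
  have HM : ∀ i : Fin (2*n+2), (i:ℕ) ≠ 0 → (i:ℕ) ≠ 2*n+1 →
      a - 2 * v i - b = lam * v i := by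
    intro i hi1 hi2
    have h := congrFun hev i
    simp only [Matrix.mulVec, dotProduct, Pi.smul_apply, smul_eq_mul] at h
    rw [Finset.sum_congr rfl (fun j _ => by rw [eM i hi1 hi2 j])] at h
    simp only [add_mul, ite_mul, one_mul, zero_mul, neg_mul, Finset.sum_add_distrib,
      Finset.sum_ite_eq', Finset.mem_univ, if_true] at h
    rw [← ha, ← hb] at h
    linarith [h]
  -- middle set
  set M : Finset (Fin (2*n+2)) := Finset.univ \ {i0, iN} with hM
  have hMsum : ∑ i ∈ M, v i = S - a - b := by
    have hsub : ({i0, iN} : Finset (Fin (2*n+2))) ⊆ Finset.univ := Finset.subset_univ _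
    have := Finset.sum_sdiff (f := v) hsub
    rw [Finset.sum_pair hne] at this
    rw [hM]
    linarith [this]
  have hMcard : (M.card : ℝ) = 2*(n:ℝ) := by
    have h1 : M.card = 2*n + 2 - 2 := by
      rw [hM, Finset.card_sdiff_of_subset (Finset.subset_univ _), Finset.card_univ,
        Fintype.card_fin, Finset.card_pair hne]
    rw [h1]; push_cast; ring
  have hmem : ∀ i ∈ M, (i:ℕ) ≠ 0 ∧ (i:ℕ) ≠ 2*n+1 := by
    intro i hi
    rw [hM, Finset.mem_sdiff, Finset.mem_insert, Finset.mem_singleton] at hi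
    push_neg at hi
    obtain ⟨-, h1, h2⟩ := hi
    constructor
    · intro h; exact h1 (Fin.ext (by simpa [hi0def] using h))
    · intro h; exact h2 (Fin.ext (by simpa [hiNdef] using h))
  have key : (2*(n:ℝ))*(a - b) - 2*(S - a - b) = lam * (S - a - b) := by
    have h := Finset.sum_congr rfl (fun i hi => HM i (hmem i hi).1 (hmem i hi).2)
    rw [Finset.sum_sub_distrib, Finset.sum_sub_distrib, Finset.sum_const,
      ← Finset.mul_sum, ← Finset.mul_sum, hMsum, nsmul_eq_mul, hMcard] at h
    have hb' : ∑ _i ∈ M, b = (M.card : ℝ) * b := by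
      rw [Finset.sum_const, nsmul_eq_mul]
    rw [hb', hMcard] at h
    ring_nf at h ⊢
    linarith [h]
  -- combine
  by_cases hcase : lam = 2*(n:ℝ) - 1
  · exact hcase
  · exfalso
    have hab : a + b = 0 := by
      have : (lam - 2*(n:ℝ) + 1) * (a + b) = 0 := by linarith [H0, HN]
      rcases mul_eq_zero.mp this with h | h
      · exact absurd (by linarith : lam = 2*(n:ℝ) - 1) hcase
      · exact h
    have hS0 : S = (lam + 2*(n:ℝ) + 3) * a := by
      have hbb : b = -a := by linarith
      rw [hbb] at H0
      linarith [H0]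
    have ha0 : a = 0 := by
      have hbb : b = -a := by linarith
      have h2 : (lam^2 + (2*(n:ℝ)+5)*lam + 6) * a = 0 := by
        rw [hbb] at key
        rw [hS0] at key
        ring_nf at key ⊢
        nlinarith [key]
      have hpos : lam^2 + (2*(n:ℝ)+5)*lam + 6 > 0 := by
        have hn' : (1:ℝ) ≤ n := by exact_mod_cast hn
        nlinarith
      rcases mul_eq_zero.mp h2 with h | h
      · linarith
      · exact h
    have hb0 : b = 0 := by linarith
    apply hv
    funext i
    by_cases hi1 : (i:ℕ) = 0
    · have : i = i0 := Fin.ext (by simpa [hi0def] using hi1)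
      rw [this]; simpa using ha0
    by_cases hi2 : (i:ℕ) = 2*n+1
    · have : i = iN := Fin.ext (by simpa [hiNdef] using hi2)
      rw [this]; simpa using hb0
    · have h := HM i hi1 hi2
      rw [ha0, hb0] at h
      have : (lam + 2) * v i = 0 := by linarith
      have := mul_eq_zero.mp this
      rcases this with h' | h'
      · linarith
      · simpa using h'
end
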